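/- Consider a uniformly absorbing MDP and two deterministic policies φ⁰ and φ¹, with π* the stationary policy π*(B|x) = ½(1{φ⁰(x) ∈ B} + 1{φ¹(x) ∈ B}) and q = q^{π*}. If π and σ are stationary policies of the MDP defined by φ⁰ and φ¹ and q(X \ X(π,σ)) = 0, where X(π,σ) = {x ∈ X : π(·|x) = σ(·|x)}, then q^π = q^σ. -/

import Mathlib

/-!
A policy of the submodel only uses the actions `φ⁰(x)` and `φ¹(x)`, each of which `π*` takes
with probability `½`; by induction on the horizon, the history distributions of `π` are therefore
absolutely continuous with respect to those of `π*`. Since `q`-null sets of `X` are null for every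
state distribution of `π*`, the kernels of `π` and `σ` agree at the current state `π`-almost
surely (at the absorbing state both are forced to play `ā`). Hence the Ionescu–Tulcea recursions
for `π` and `σ` coincide step by step, and so do all state distributions and `q^π = q^σ`.
-/

open MeasureTheory ProbabilityTheory Filter Topology
open scoped ENNReal NNReal

namespace PaperMDP

variable {S A : Type*} [MeasurableSpace S] [MeasurableSpace A]

/-- Histories up to time `t`: states `x_0,…,x_t` and actions `a_0,…,a_{t-1}`. -/
abbrev Hist (S A : Type*) (t : ℕ) : Type _ := (Fin (t + 1) → S) × (Fin t → A)

/-- A Markov decision process model: action sets `act x` with measurable graph admitting a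
measurable selector, and a transition probability kernel `p`.  The initial distribution is
supplied separately. -/
structure MDP (S A : Type*) [MeasurableSpace S] [MeasurableSpace A] where
  act : S → Set A
  act_nonempty : ∀ x, (act x).Nonempty
  graph_meas : MeasurableSet {q : S × A | q.2 ∈ act q.1}
  sel0 : S → A
  sel0_meas : Measurable sel0
  sel0_mem : ∀ x, sel0 x ∈ act x
  p : Kernel (S × A) S
  p_markov : IsMarkovKernel p

variable (M : MDP S A)

/-- A general (randomized, history-dependent) policy. -/
structure Policy where
  ker : (t : ℕ) → Kernel (Hist S A t) A
  prob : ∀ t, IsMarkovKernel (ker t)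
  feasible : ∀ t (h : Hist S A t), ker t h {a | a ∈ M.act (h.1 (Fin.last t))} = 1

/-- A measurable selector, identified with a deterministic policy. -/
structure Selector where
  toFun : S → A
  meas : Measurable toFun
  mem : ∀ x, toFun x ∈ M.act x

/-- A stationary (randomized) policy. -/
structure StatPolicy where
  ker : Kernel S A
  prob : IsMarkovKernel ker
  feasible : ∀ x, ker x {a | a ∈ M.act x} = 1

/-- A nonrandomized Markov policy: a sequence of measurable selectors. -/
structure MarkovNR where
  sel : ℕ → S → A
  meas : ∀ t, Measurable (sel t)
  mem : ∀ t x, sel t x ∈ M.act x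

variable {M}

/-- The policy determined by a selector (a deterministic policy). -/
noncomputable def Selector.policy (φ : Selector M) : Policy M where
  ker t := Kernel.deterministic (fun h : Hist S A t => φ.toFun (h.1 (Fin.last t)))
    (φ.meas.comp ((measurable_pi_apply (Fin.last t)).comp measurable_fst))
  prob t := by infer_instance
  feasible t h := by
    rw [Kernel.deterministic_apply]
    exact Measure.dirac_apply_of_mem (φ.mem _)

/-- The policy determined by a stationary policy. -/
noncomputable def StatPolicy.policy (s : StatPolicy M) : Policy M where
  ker t := s.ker.comap (fun h : Hist S A t => h.1 (Fin.last t))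
    ((measurable_pi_apply (Fin.last t)).comp measurable_fst)
  prob t := by have := s.prob; infer_instance
  feasible t h := by rw [Kernel.comap_apply]; exact s.feasible _

/-- The policy determined by a nonrandomized Markov policy. -/
noncomputable def MarkovNR.policy (φ : MarkovNR M) : Policy M where
  ker t := Kernel.deterministic (fun h : Hist S A t => φ.sel t (h.1 (Fin.last t)))
    ((φ.meas t).comp ((measurable_pi_apply (Fin.last t)).comp measurable_fst))
  prob t := by infer_instance
  feasible t h := by
    rw [Kernel.deterministic_apply]
    exact Measure.dirac_apply_of_mem (φ.mem _ _)

/-- Finite-horizon strategic (history) measures, built by the Ionescu–Tulcea recursion from the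
initial distribution `μ`, the policy `π` and the transition kernel `M.p`. -/
noncomputable def histMeas (μ : Measure S) (π : Policy M) : (t : ℕ) → Measure (Hist S A t)
  | 0 => μ.map (fun x => (fun _ => x, fun i => i.elim0))
  | (t + 1) => (histMeas μ π t).bind (fun h =>
      (π.ker t h).bind (fun a =>
        (M.p (h.1 (Fin.last t), a)).map (fun y => (Fin.snoc h.1 y, Fin.snoc h.2 a))))

/-- The joint distribution of the state-action pair `(x_t, a_t)` under policy `π`. -/
noncomputable def saMeas (μ : Measure S) (π : Policy M) (t : ℕ) : Measure (S × A) :=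
  (histMeas μ π t).bind (fun h => (π.ker t h).map (fun a => (h.1 (Fin.last t), a)))

/-- The distribution of the state `x_t` under policy `π`. -/
noncomputable def stateMeas (μ : Measure S) (π : Policy M) (t : ℕ) : Measure S :=
  (histMeas μ π t).map (fun h => h.1 (Fin.last t))

/-- `survive μ π star t = P^π(T^{star} > t)`, the probability that the process has not yet
reached the absorbing state `star` by time `t`. -/
noncomputable def survive (μ : Measure S) (π : Policy M) (star : S) (t : ℕ) : ℝ≥0∞ :=
  histMeas μ π t {h | ∀ s, h.1 s ≠ star}

/-- The expected total reward vector `v^π` (well defined whenever the series converges;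
for absorbing MDPs with bounded rewards vanishing at the absorbing state this coincides with
`E^π Σ_{t<T} r(x_t,a_t)`). -/
noncomputable def perf (μ : Measure S) {N : ℕ} (r : S × A → Fin N → ℝ) (π : Policy M) :
    Fin N → ℝ :=
  fun n => ∑' t : ℕ, ∫ z, r z n ∂(saMeas μ π t)

/-- The expected total reward for a single criterion. -/
noncomputable def perfR (μ : Measure S) (r : S × A → ℝ) (π : Policy M) : ℝ :=
  ∑' t : ℕ, ∫ z, r z ∂(saMeas μ π t)

/-- The expected total discounted reward vector `v_β^π`. -/
noncomputable def dperf (μ : Measure S) {N : ℕ} (r : S × A → Fin N → ℝ) (β : ℝ)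
    (π : Policy M) : Fin N → ℝ :=
  fun n => ∑' t : ℕ, β ^ t * ∫ z, r z n ∂(saMeas μ π t)

variable (M)

/-- The set of performance vectors of all policies. -/
def perfSet (μ : Measure S) {N : ℕ} (r : S × A → Fin N → ℝ) : Set (Fin N → ℝ) :=
  {v | ∃ π : Policy M, perf μ r π = v}

/-- The set of performance vectors of deterministic policies. -/
def perfSetDet (μ : Measure S) {N : ℕ} (r : S × A → Fin N → ℝ) : Set (Fin N → ℝ) :=
  {v | ∃ φ : Selector M, perf μ r φ.policy = v}

/-- The set of performance vectors of stationary policies. -/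
def perfSetStat (μ : Measure S) {N : ℕ} (r : S × A → Fin N → ℝ) : Set (Fin N → ℝ) :=
  {v | ∃ s : StatPolicy M, perf μ r s.policy = v}

/-- The set of scalar performance values of all policies (single criterion). -/
def perfRSet (μ : Measure S) (r : S × A → ℝ) : Set ℝ :=
  {v | ∃ π : Policy M, perfR μ r π = v}

/-- The set of scalar performance values of deterministic policies (single criterion). -/
def perfRSetDet (μ : Measure S) (r : S × A → ℝ) : Set ℝ :=
  {v | ∃ φ : Selector M, perfR μ r φ.policy = v}

/-- The set of discounted performance vectors of all policies. -/
def dperfSet (μ : Measure S) {N : ℕ} (r : S × A → Fin N → ℝ) (β : ℝ) : Set (Fin N → ℝ) :=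
  {v | ∃ π : Policy M, dperf μ r β π = v}

/-- The set of discounted performance vectors of deterministic policies. -/
def dperfSetDet (μ : Measure S) {N : ℕ} (r : S × A → Fin N → ℝ) (β : ℝ) : Set (Fin N → ℝ) :=
  {v | ∃ φ : Selector M, dperf μ r β φ.policy = v}

/-- An MDP (with initial distribution `μ`, reward `r`, state space `X̄ = X ∪ {star}`) is
absorbing. -/
structure Absorbing (μ : Measure S) {N : ℕ} (r : S × A → Fin N → ℝ) (star : S) (abar : A) :
    Prop where
  mu_prob : IsProbabilityMeasure μ
  mu_star : μ {star} = 0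
  act_star : M.act star = {abar}
  p_star : M.p (star, abar) {star} = 1
  r_star : ∀ n, r (star, abar) n = 0
  hit_bdd : ∃ L : ℝ, ∀ π : Policy M, (∑' t : ℕ, survive μ π star t) ≤ ENNReal.ofReal L

/-- A uniformly absorbing MDP:  `sup_{π ∈ 𝕄} E^π Σ_{t ≥ n} 1{t < T} → 0` as `n → ∞`. -/
structure UnifAbsorbing (μ : Measure S) {N : ℕ} (r : S × A → Fin N → ℝ) (star : S) (abar : A)
    extends Absorbing M μ r star abar : Prop where
  unif : Tendsto (fun n : ℕ => ⨆ φ : MarkovNR M, ∑' t : ℕ, survive μ φ.policy star (n + t))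
    atTop (𝓝 (0 : ℝ≥0∞))

/-- An absorbing MDP is atomless: the initial distribution and the transition probabilities are
atomless on `X = X̄ \ {star}`. -/
def AtomlessAbs (μ : Measure S) (star : S) : Prop :=
  (∀ x, x ≠ star → μ {x} = 0) ∧
    ∀ x y a, x ≠ star → y ≠ star → a ∈ M.act x → M.p (x, a) {y} = 0

/-- A (discounted) MDP is atomless. -/
def AtomlessD (μ : Measure S) : Prop :=
  (∀ x, μ {x} = 0) ∧ ∀ x y a, a ∈ M.act x → M.p (x, a) {y} = 0

variable {M}

/-- The occupancy measure `Q^π` on `X × A` (where `X = X̄ \ {star}`). -/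
noncomputable def occMeas (μ : Measure S) (π : Policy M) (star : S) : Measure (S × A) :=
  (Measure.sum fun t : ℕ => saMeas μ π t).restrict {z : S × A | z.1 ≠ star}

/-- `q_n^π`, the distribution of `x_n` restricted to `X = X̄ \ {star}`. -/
noncomputable def qn (μ : Measure S) (π : Policy M) (star : S) (n : ℕ) : Measure S :=
  (stateMeas μ π n).restrict {x | x ≠ star}

/-- The occupancy marginal `q^π = Σ_n q_n^π` on `X`. -/
noncomputable def qMeas (μ : Measure S) (π : Policy M) (star : S) : Measure S :=
  Measure.sum fun n : ℕ => qn μ π star n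

/-- Distance in total variation between two (finite) measures. -/
noncomputable def dTV {Z : Type*} [MeasurableSpace Z] (μ ν : Measure Z) : ℝ≥0∞ :=
  ⨆ (s : Set Z) (_ : MeasurableSet s), max (μ s - ν s) (ν s - μ s)

/-- `M'` is a submodel of `M`: same state and action spaces and transition probabilities, and
smaller action sets. -/
def IsSubmodel (M' M : MDP S A) : Prop :=
  M'.p = M.p ∧ ∀ x, M'.act x ⊆ M.act x

/-- The stationary policy `π*` averaging two deterministic policies:
`π*(B|x) = ½(1{φ⁰(x) ∈ B} + 1{φ¹(x) ∈ B})`. -/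
noncomputable def mixStat (f0 f1 : Selector M) : StatPolicy M where
  ker :=
    { toFun := fun x => (2 : ℝ≥0∞)⁻¹ • (Measure.dirac (f0.toFun x) + Measure.dirac (f1.toFun x))
      measurable' := by
        apply Measure.measurable_of_measurable_coe
        intro s hs
        simp_rw [Measure.smul_apply, Measure.add_apply, smul_eq_mul,
          Measure.dirac_apply' _ hs]
        exact (((measurable_one.indicator hs).comp f0.meas).add
          ((measurable_one.indicator hs).comp f1.meas)).const_mul _ }
  prob := by
    constructor
    intro x
    constructor
    show ((2 : ℝ≥0∞)⁻¹ • (Measure.dirac (f0.toFun x) + Measure.dirac (f1.toFun x))) Set.univ = 1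
    rw [Measure.smul_apply, Measure.add_apply, measure_univ, measure_univ, smul_eq_mul]
    rw [one_add_one_eq_two, ENNReal.inv_mul_cancel two_ne_zero (by simp)]
  feasible x := by
    show ((2 : ℝ≥0∞)⁻¹ • (Measure.dirac (f0.toFun x) + Measure.dirac (f1.toFun x)))
      {a | a ∈ M.act x} = 1
    rw [Measure.smul_apply, Measure.add_apply,
      Measure.dirac_apply_of_mem (show f0.toFun x ∈ {a | a ∈ M.act x} from f0.mem x),
      Measure.dirac_apply_of_mem (show f1.toFun x ∈ {a | a ∈ M.act x} from f1.mem x),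
      smul_eq_mul, one_add_one_eq_two,
      ENNReal.inv_mul_cancel two_ne_zero (by simp)]

/-- A point `v` of the performance set allows the dimensionality reduction. -/
def AllowsDimRed (M : MDP S A) (μ : Measure S) {N : ℕ} (r : S × A → Fin N → ℝ)
    (v : Fin N → ℝ) : Prop :=
  ∃ (i : Fin N) (b : Fin N → ℝ) (d : ℝ) (M' : MDP S A), IsSubmodel M' M ∧
    v ∈ perfSet M' μ r ∧
    ∀ w ∈ perfSet M' μ r, w i = d + ∑ j ∈ Finset.univ.erase i, b j * w j

end PaperMDP

theorem Measurable.finSnoc {α β : Type*} [MeasurableSpace α] [MeasurableSpace β] {n : ℕ}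
    {f : α → Fin n → β} {g : α → β} (hf : Measurable f) (hg : Measurable g) :
    Measurable fun a => (Fin.snoc (f a) (g a) : Fin (n + 1) → β) := by
  refine measurable_pi_lambda _ fun i => ?_
  cases i using Fin.lastCases with
  | last => simpa using hg
  | cast j => simpa [Function.comp_def] using (measurable_pi_apply j).comp hf

namespace ProbabilityTheory.Kernel

variable {α β γ : Type*} [MeasurableSpace α] [MeasurableSpace β] [MeasurableSpace γ]

theorem measurable_map_prodMk (κ : Kernel α β) [IsSFiniteKernel κ] {f : α × β → γ}
    (hf : Measurable f) : Measurable fun a => (κ a).map fun b => f (a, b) := by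
  refine Measure.measurable_of_measurable_coe _ fun s hs => ?_
  have hmap : ∀ a, (κ a).map (fun b => f (a, b)) s = κ a (Prod.mk a ⁻¹' (f ⁻¹' s)) :=
    fun a => Measure.map_apply (hf.comp measurable_prodMk_left) hs
  simp_rw [hmap]
  exact measurable_kernel_prodMk_left (hf hs)

theorem measurable_bind_prodMk (κ : Kernel α β) [IsSFiniteKernel κ]
    {g : α × β → Measure γ} (hg : Measurable g) :
    Measurable fun a => (κ a).bind fun b => g (a, b) := by
  refine Measure.measurable_of_measurable_coe _ fun s hs => ?_
  have hbind : ∀ a, (κ a).bind (fun b => g (a, b)) s = ∫⁻ b, g (a, b) s ∂κ a :=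
    fun a => Measure.bind_apply hs (hg.comp measurable_prodMk_left).aemeasurable
  simp_rw [hbind]
  exact ((Measure.measurable_coe hs).comp hg).lintegral_kernel_prod_right'

end ProbabilityTheory.Kernel

namespace MeasureTheory.Measure

variable {α β : Type*} [MeasurableSpace α] [MeasurableSpace β]

theorem bind_absolutelyContinuous_bind {m m' : Measure α} {f g : α → Measure β} (hm : m ≪ m')
    (hfg : ∀ a, f a ≪ g a) (hg : Measurable g) : m.bind f ≪ m'.bind g := by
  refine AbsolutelyContinuous.mk fun s hs hs0 => ?_
  rw [bind_apply hs hg.aemeasurable] at hs0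
  have hg0 : (fun a => g a s) =ᵐ[m'] 0 :=
    (lintegral_eq_zero_iff ((measurable_coe hs).comp hg)).mp hs0
  have hf0 : (fun a => f a s) =ᵐ[m] 0 :=
    Filter.Eventually.mono (hm.ae_le hg0) fun a ha => hfg a ha
  refine nonpos_iff_eq_zero.mp <| (bind_apply_le f hs).trans_eq ?_
  rw [lintegral_congr_ae hf0, Pi.zero_def, lintegral_zero]

theorem absolutelyContinuous_dirac_add_dirac {μ : Measure α} {a b : α} (h : μ {a, b}ᶜ = 0) :
    μ ≪ dirac a + dirac b := by
  refine AbsolutelyContinuous.mk fun s hs hs0 => measure_mono_null (fun x hx => ?_) h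
  simp only [add_apply, add_eq_zero, dirac_apply' _ hs, Set.indicator_apply_eq_zero,
    Pi.one_apply, one_ne_zero, imp_false] at hs0
  rintro (rfl | rfl)
  exacts [hs0.1 hx, hs0.2 hx]

theorem eq_dirac_of_measure_singleton_eq_one [MeasurableSingletonClass α] {μ : Measure α}
    [IsProbabilityMeasure μ] {a : α} (h : μ {a} = 1) : μ = dirac a := by
  have hae : ∀ᵐ x ∂μ, x ∈ ({a} : Set α) :=
    (mem_ae_iff_prob_eq_one (measurableSet_singleton a)).mpr h
  rw [← restrict_eq_self_of_ae_mem hae, restrict_singleton, h, one_smul]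

end MeasureTheory.Measure

namespace PaperMDP

variable {S A : Type*} [MeasurableSpace S] [MeasurableSpace A] {M : MDP S A}

theorem measurable_hist_last (t : ℕ) : Measurable fun h : Hist S A t => h.1 (Fin.last t) :=
  (measurable_pi_apply _).comp measurable_fst

variable (M) in
noncomputable def histTransition (t : ℕ) (z : Hist S A t × A) : Measure (Hist S A (t + 1)) :=
  (M.p (z.1.1 (Fin.last t), z.2)).map fun y => (Fin.snoc z.1.1 y, Fin.snoc z.1.2 z.2)

variable (M) in
noncomputable def histStep (κ : Kernel S A) (t : ℕ) (h : Hist S A t) :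
    Measure (Hist S A (t + 1)) :=
  (κ (h.1 (Fin.last t))).bind fun a => histTransition M t (h, a)

theorem measurable_histTransition (t : ℕ) : Measurable (histTransition M t) := by
  have := M.p_markov
  refine Kernel.measurable_map_prodMk
    (M.p.comap (fun z : Hist S A t × A => (z.1.1 (Fin.last t), z.2))
      (((measurable_hist_last t).comp measurable_fst).prodMk measurable_snd))
    (f := fun q : (Hist S A t × A) × S =>
      ((Fin.snoc q.1.1.1 q.2, Fin.snoc q.1.1.2 q.1.2) : Hist S A (t + 1))) ?_
  exact (measurable_fst.fst.fst.finSnoc measurable_snd).prodMk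
    (measurable_fst.fst.snd.finSnoc measurable_fst.snd)

theorem measurable_histStep (κ : Kernel S A) [IsSFiniteKernel κ] (t : ℕ) :
    Measurable (histStep M κ t) :=
  Kernel.measurable_bind_prodMk (κ.comap _ (measurable_hist_last t)) (measurable_histTransition t)

theorem histMeas_succ (μ : Measure S) (π : StatPolicy M) (t : ℕ) :
    histMeas μ π.policy (t + 1) = (histMeas μ π.policy t).bind (histStep M π.ker t) :=
  rfl

theorem histMeas_absolutelyContinuous (μ : Measure S) {π σ : StatPolicy M}
    (hπσ : ∀ x, π.ker x ≪ σ.ker x) (t : ℕ) :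
    histMeas μ π.policy t ≪ histMeas μ σ.policy t := by
  have := σ.prob
  induction t with
  | zero => exact .rfl
  | succ t ih =>
    exact Measure.bind_absolutelyContinuous_bind ih
      (fun h => Measure.bind_absolutelyContinuous_bind (hπσ _) (fun _ => .rfl)
        (measurable_histTransition t |>.comp measurable_prodMk_left))
      (measurable_histStep σ.ker t)

theorem histMeas_eq_of_ae_eq (μ : Measure S) {π σ : StatPolicy M}
    (hπσ : ∀ t, ∀ᵐ h ∂histMeas μ π.policy t,
      π.ker (h.1 (Fin.last t)) = σ.ker (h.1 (Fin.last t)))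
    (t : ℕ) : histMeas μ π.policy t = histMeas μ σ.policy t := by
  induction t with
  | zero => rfl
  | succ t ih =>
    rw [histMeas_succ, histMeas_succ, ← ih]
    exact Measure.bind_congr_right <| (hπσ t).mono fun h hh => by simp only [histStep, hh]

theorem histMeas_last_preimage_eq_zero {μ : Measure S} {π : Policy M} {star : S} {D : Set S}
    (hD : qMeas μ π star D = 0) (hD_star : D ⊆ {x | x ≠ star}) (t : ℕ) :
    histMeas μ π t ((fun h : Hist S A t => h.1 (Fin.last t)) ⁻¹' D) = 0 := by
  refine nonpos_iff_eq_zero.mp ?_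
  calc histMeas μ π t ((fun h : Hist S A t => h.1 (Fin.last t)) ⁻¹' D)
      ≤ stateMeas μ π t D := Measure.le_map_apply (measurable_hist_last t).aemeasurable D
    _ = qn μ π star t D := (Measure.restrict_eq_self _ hD_star).symm
    _ ≤ qMeas μ π star D := Measure.le_sum (qn μ π star) t D
    _ = 0 := hD

theorem StatPolicy.ker_absolutelyContinuous_mixStat [MeasurableSingletonClass A]
    {f0 f1 : Selector M} (π : StatPolicy M) (hπ : ∀ x, π.ker x {f0.toFun x, f1.toFun x} = 1)
    (x : S) : π.ker x ≪ (mixStat f0 f1).ker x := by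
  have := π.prob
  have hpair : π.ker x {f0.toFun x, f1.toFun x}ᶜ = 0 :=
    (prob_compl_eq_zero_iff (Set.toFinite _).measurableSet).mpr (hπ x)
  exact (Measure.absolutelyContinuous_dirac_add_dirac hpair).trans
    (Measure.absolutelyContinuous_smul (by norm_num))

theorem StatPolicy.ker_eq_dirac_of_act_eq_singleton [MeasurableSingletonClass A]
    (π : StatPolicy M) {x : S} {a : A} (hx : M.act x = {a}) : π.ker x = Measure.dirac a := by
  have := π.prob
  have h := π.feasible x
  rw [hx, Set.ofPred_mem_eq] at h
  exact Measure.eq_dirac_of_measure_singleton_eq_one h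

end PaperMDP

open PaperMDP in
theorem qMeas_eq_of_agree_q_ae_general
    {S A : Type*} [MeasurableSpace S]
    [MeasurableSpace A] [StandardBorelSpace A]
    (M : MDP S A) (μ : MeasureTheory.Measure S) (star : S) (abar : A)
    {N : ℕ} (r : S × A → Fin N → ℝ)
    (hU : UnifAbsorbing M μ r star abar)
    (f0 f1 : Selector M)
    (π σ : StatPolicy M)
    (hπ : ∀ x : S, π.ker x {f0.toFun x, f1.toFun x} = 1)
    (hq : qMeas μ (mixStat f0 f1).policy star {x : S | x ≠ star ∧ π.ker x ≠ σ.ker x} = 0) :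
    qMeas μ π.policy star = qMeas μ σ.policy star := by
  have hstar : π.ker star = σ.ker star := by
    rw [π.ker_eq_dirac_of_act_eq_singleton hU.act_star,
      σ.ker_eq_dirac_of_act_eq_singleton hU.act_star]
  have hmix : ∀ t, ∀ᵐ h ∂histMeas μ (mixStat f0 f1).policy t,
      π.ker (h.1 (Fin.last t)) = σ.ker (h.1 (Fin.last t)) := by
    intro t
    refine ae_iff.mpr <| measure_mono_null (fun h hne => ?_)
      (histMeas_last_preimage_eq_zero hq (fun x hx => hx.1) t)
    exact ⟨fun (hx : h.1 (Fin.last t) = star) => hne (hx ▸ hstar), hne⟩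
  have hagree : ∀ t, ∀ᵐ h ∂histMeas μ π.policy t,
      π.ker (h.1 (Fin.last t)) = σ.ker (h.1 (Fin.last t)) := fun t =>
    (histMeas_absolutelyContinuous μ (π.ker_absolutelyContinuous_mixStat hπ) t).ae_le (hmix t)
  simp only [qMeas, qn, stateMeas, histMeas_eq_of_ae_eq μ hagree]

open PaperMDP in
/-- Uniformly absorbing MDP, two deterministic policies `φ⁰, φ¹`, mixing
policy `π*` with occupancy marginal `q`.  If two stationary policies `π, σ` of the submodel
defined by `φ⁰, φ¹` agree `q`-almost everywhere on `X`, then `q^π = q^σ`. -/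
theorem qMeas_eq_of_agree_q_ae
    {S A : Type*} [MeasurableSpace S] [StandardBorelSpace S]
    [MeasurableSpace A] [StandardBorelSpace A]
    (M : MDP S A) (μ : MeasureTheory.Measure S) (star : S) (abar : A)
    {N : ℕ} (r : S × A → Fin N → ℝ)
    (hU : UnifAbsorbing M μ r star abar)
    (f0 f1 : Selector M)
    (π σ : StatPolicy M)
    (hπ : ∀ x : S, π.ker x {f0.toFun x, f1.toFun x} = 1)
    (hσ : ∀ x : S, σ.ker x {f0.toFun x, f1.toFun x} = 1)
    (hq : qMeas μ (mixStat f0 f1).policy star {x : S | x ≠ star ∧ π.ker x ≠ σ.ker x} = 0) :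
    qMeas μ π.policy star = qMeas μ σ.policy star :=
  qMeas_eq_of_agree_q_ae_general M μ star abar r hU f0 f1 π σ hπ hq
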